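/- arXiv:2412.17057 — 9 statements merged into one kernel-verified Lean document; each statement's English description precedes it below -/
import Mathlib

section
/- Let a ≤ b be coprime positive integers and let 0 = i₁, j₁, i₂, j₂, ..., jₙ, i_{n+1} = 0 be a sequence of non-negative integers such that b divides iₗ - jₗ and a divides jₗ - i_{l+1} for each l. Then either the sum over l of (iₗ - jₗ) equals 0, or there exists some l with iₗ ≥ a + b - 1 or jₗ ≥ a + b - 1. -/
/-- Auxiliary potential function: `g x` is a representative in `[0, a-1]` of
`(x+1) * u - 1` modulo `a`, where `u` is an inverse of `b` mod `a`. -/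
private def gfun (a u x : ℤ) : ℤ := ((x + 1) * u + (a - 1)) % a

private lemma gfun_congr (a u x y : ℤ) (h : a ∣ x - y) : gfun a u x = gfun a u y := by
  unfold gfun
  have hxy : x ≡ y [ZMOD a] := (Int.modEq_iff_dvd.mpr h).symm
  exact ((hxy.add_right 1).mul_right u).add_right (a - 1)

private lemma gfun_nonneg (a u x : ℤ) (ha : 0 < a) : 0 ≤ gfun a u x :=
  Int.emod_nonneg _ (by omega)

private lemma gfun_lt (a u x : ℤ) (ha : 0 < a) : gfun a u x < a :=
  Int.emod_lt_of_pos _ ha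

private lemma gfun_step (a b u x : ℤ) (ha : 0 < a) (hu : a ∣ b * u - 1)
    (hx : x % a ≠ a - 1) : gfun a u (x + b) = gfun a u x + 1 := by
  have hne : gfun a u x ≠ a - 1 := by
    intro h
    -- then a ∣ (x+1)*u, so a ∣ x+1 (multiply by b), so x % a = a-1
    have h1 : a ∣ (x + 1) * u := by
      have h2 : a ∣ ((x + 1) * u + (a - 1)) - (a - 1) :=
        Int.dvd_self_sub_of_emod_eq h
      simpa using h2
    have h3 : a ∣ (x + 1) := by
      have h4 : a ∣ (x + 1) * u * b := h1.mul_right b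
      have h5 : a ∣ (x + 1) * (b * u - 1) := hu.mul_left (x + 1)
      have h6 : a ∣ (x + 1) * u * b - (x + 1) * (b * u - 1) := h4.sub h5
      have h7 : (x + 1) * u * b - (x + 1) * (b * u - 1) = x + 1 := by ring
      rwa [h7] at h6
    -- x ≡ -1 mod a hence x % a = a - 1
    have hmod : x % a = (-1 : ℤ) % a := by
      have hm : (-1 : ℤ) ≡ x [ZMOD a] := Int.modEq_iff_dvd.mpr (by simpa using h3)
      exact hm.symm
    have hm1 : (-1 : ℤ) % a = a - 1 := by
      rw [show (-1 : ℤ) = (a - 1) + a * (-1) by ring, Int.add_mul_emod_self_left,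
        Int.emod_eq_of_lt (by omega) (by omega)]
    rw [hm1] at hmod
    exact hx hmod
  have h0 : 0 ≤ gfun a u x := gfun_nonneg a u x ha
  have h1 : gfun a u x < a := gfun_lt a u x ha
  have hmodeq : ((x + b + 1) * u + (a - 1)) % a = (gfun a u x + 1) % a := by
    have e1 : (x + 1) * u + (a - 1) ≡ gfun a u x [ZMOD a] :=
      (Int.emod_emod_of_dvd _ (dvd_refl a)).symm
    have e2 : (x + b + 1) * u + (a - 1) ≡ gfun a u x + (b * u) [ZMOD a] := by
      have : (x + b + 1) * u + (a - 1) = ((x + 1) * u + (a - 1)) + b * u := by ring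
      rw [this]
      exact e1.add_right (b * u)
    have e3 : gfun a u x + b * u ≡ gfun a u x + 1 [ZMOD a] := by
      apply Int.ModEq.add_left
      exact (Int.modEq_iff_dvd.mpr (by simpa using hu)).symm
    exact e2.trans e3
  have hsmall : (gfun a u x + 1) % a = gfun a u x + 1 :=
    Int.emod_eq_of_lt (by omega) (by omega)
  show ((x + b + 1) * u + (a - 1)) % a = gfun a u x + 1
  rw [hmodeq, hsmall]

/-- The key step lemma: on `[0, a+b-2]`, a move by a multiple of `b` changes the
potential by exactly the multiple. -/
private lemma gfun_bstep (a b u x y : ℤ) (ha : 0 < a) (hab : a ≤ b) (hu : a ∣ b * u - 1)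
    (hx0 : 0 ≤ x) (hy0 : 0 ≤ y) (hx2 : x ≤ a + b - 2) (hy2 : y ≤ a + b - 2)
    (hd : b ∣ x - y) : x - y = b * (gfun a u x - gfun a u y) := by
  have hb : 0 < b := lt_of_lt_of_le ha hab
  obtain ⟨d, hdeq⟩ := hd
  have hd1 : d ≤ 1 := by nlinarith
  have hd2 : -1 ≤ d := by nlinarith
  interval_cases d
  · -- d = -1 : y = x + b
    have hyx : y = x + b := by omega
    have hxmod : x % a ≠ a - 1 := by
      have hxa : x ≤ a - 2 := by omega
      rw [Int.emod_eq_of_lt hx0 (by omega)]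
      omega
    have := gfun_step a b u x ha hu hxmod
    rw [hyx, this]
    ring
  · -- d = 0
    have hxy : x = y := by omega
    rw [hxy]
    ring
  · -- d = 1 : x = y + b
    have hxy : x = y + b := by omega
    have hymod : y % a ≠ a - 1 := by
      have hya : y ≤ a - 2 := by omega
      rw [Int.emod_eq_of_lt hy0 (by omega)]
      omega
    have := gfun_step a b u y ha hu hymod
    rw [hxy, this]
    ring

/-- A simple lemma on integer sequences (Lemma `number_lemma`). -/
theorem stmt_0 (a b : ℕ) (ha : 0 < a) (hab : a ≤ b) (hcop : Nat.Coprime a b)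
    (n : ℕ) (i j : ℕ → ℕ)
    (hi1 : i 1 = 0) (hin : i (n + 1) = 0)
    (hdivb : ∀ l, 1 ≤ l → l ≤ n → (b : ℤ) ∣ (i l : ℤ) - (j l : ℤ))
    (hdiva : ∀ l, 1 ≤ l → l ≤ n → (a : ℤ) ∣ (j l : ℤ) - (i (l + 1) : ℤ)) :
    (∑ l ∈ Finset.Icc 1 n, ((i l : ℤ) - (j l : ℤ))) = 0 ∨
      ∃ l, 1 ≤ l ∧ l ≤ n ∧ (a + b - 1 ≤ i l ∨ a + b - 1 ≤ j l) := by
  by_cases hbig : ∃ l, 1 ≤ l ∧ l ≤ n ∧ (a + b - 1 ≤ i l ∨ a + b - 1 ≤ j l)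
  · exact Or.inr hbig
  left
  push_neg at hbig
  have hsmall : ∀ l, 1 ≤ l → l ≤ n → i l ≤ a + b - 2 ∧ j l ≤ a + b - 2 := by
    intro l h1 h2
    have := hbig l h1 h2
    omega
  -- Bezout: get u with a ∣ b*u - 1
  obtain ⟨s, t, hst⟩ : IsCoprime (a : ℤ) (b : ℤ) := Nat.isCoprime_iff_coprime.mpr hcop
  have hu : (a : ℤ) ∣ (b : ℤ) * t - 1 := ⟨-s, by linarith⟩
  have haZ : (0 : ℤ) < a := by exact_mod_cast ha
  have habZ : (a : ℤ) ≤ b := by exact_mod_cast hab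
  set F : ℕ → ℤ := fun l => gfun a t (i l) with hF
  have key : ∀ l ∈ Finset.Icc 1 n,
      (i l : ℤ) - (j l : ℤ) = (b : ℤ) * (F l - F (l + 1)) := by
    intro l hl
    rw [Finset.mem_Icc] at hl
    obtain ⟨h1, h2⟩ := hl
    obtain ⟨hi2, hj2⟩ := hsmall l h1 h2
    have step1 : (i l : ℤ) - (j l : ℤ) = (b : ℤ) * (gfun a t (i l) - gfun a t (j l)) := by
      apply gfun_bstep a b t _ _ haZ habZ hu (by positivity) (by positivity)
      · omega
      · omega
      · exact hdivb l h1 h2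
    have step2 : gfun (a : ℤ) t (j l : ℤ) = gfun a t (i (l + 1) : ℤ) :=
      gfun_congr a t _ _ (hdiva l h1 h2)
    rw [step1, step2]
  rw [Finset.sum_congr rfl key, ← Finset.mul_sum]
  have hre : ∑ l ∈ Finset.Icc 1 n, (F l - F (l + 1))
      = ∑ k ∈ Finset.range n, (F (k + 1) - F (k + 1 + 1)) := by
    rw [← Finset.Ico_add_one_right_eq_Icc, Finset.sum_Ico_eq_sum_range]
    apply Finset.sum_congr rfl
    intro k _
    rw [Nat.add_comm 1 k]
  rw [hre, Finset.sum_range_sub' (fun k => F (k + 1)) n]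
  have hF1 : F 1 = F (n + 1) := by
    simp only [hF, hi1, hin]
  rw [hF1]
  ring
end

section
/- If G is a group with left 2-unique products and R is a (not necessarily commutative) domain, then the group ring RG contains no left engulfing elements; that is, for any nonzero a, b ∈ RG with supp(ab) ⊆ supp(b), one has a ∈ R (i.e., supp(a) ⊆ {1}). -/
/-! Apply left 2-unique products to `A = supp a ∪ {1}` and `B = supp b`. One of the two unique
products `α * β` has `α ≠ 1`, so `α ∈ supp a`, and the coefficient of `α * β` in `a * b` is
`a_α * b_β ≠ 0`. Hence `α * β ∈ supp (a * b) ⊆ supp b`, and `1 * (α * β)` is a second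
representation of `α * β` in `A * B`, contradicting uniqueness. -/

/-- A group `G` has *left 2-unique products* if for any finite subsets `A, B ⊆ G`
with `|A| ≥ 2` and `B` nonempty, there exist two elements `a₁b₁, a₂b₂ ∈ AB`,
each uniquely represented as a product of an element of `A` and an element of `B`,
with `a₁ ≠ a₂`. -/
def LeftTwoUniqueProducts (G : Type*) [Group G] : Prop :=
  ∀ (A B : Finset G), 2 ≤ A.card → B.Nonempty →
    ∃ a₁ ∈ A, ∃ b₁ ∈ B, ∃ a₂ ∈ A, ∃ b₂ ∈ B, a₁ ≠ a₂ ∧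
      (∀ a ∈ A, ∀ b ∈ B, a * b = a₁ * b₁ → a = a₁ ∧ b = b₁) ∧
      (∀ a ∈ A, ∀ b ∈ B, a * b = a₂ * b₂ → a = a₂ ∧ b = b₂)

namespace MonoidAlgebra

variable {R G : Type*} [Semiring R] [NoZeroDivisors R]

theorem mul_mem_support_mul_of_uniqueMul [Mul G] {a b : MonoidAlgebra R G} {α β : G}
    (hα : α ∈ a.coeff.support) (hβ : β ∈ b.coeff.support)
    (hu : UniqueMul a.coeff.support b.coeff.support α β) :
    α * β ∈ (a * b).coeff.support := by
  rw [Finsupp.mem_support_iff, coeff_mul_mul_of_uniqueMul hu]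
  exact mul_ne_zero (Finsupp.mem_support_iff.mp hα) (Finsupp.mem_support_iff.mp hβ)

theorem eq_one_of_uniqueMul_insert_one [MulOneClass G] [DecidableEq G]
    {a b : MonoidAlgebra R G} (hsupp : (a * b).coeff.support ⊆ b.coeff.support) {α β : G}
    (hα : α ∈ insert 1 a.coeff.support) (hβ : β ∈ b.coeff.support)
    (hu : UniqueMul (insert 1 a.coeff.support) b.coeff.support α β) : α = 1 := by
  by_contra hα1
  have hαa : α ∈ a.coeff.support := (Finset.mem_insert.mp hα).resolve_left hα1
  have hαβ : α * β ∈ b.coeff.support :=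
    hsupp <| mul_mem_support_mul_of_uniqueMul hαa hβ <|
      hu.mono (Finset.subset_insert _ _) subset_rfl
  exact hα1 (hu (Finset.mem_insert_self 1 _) hαβ (one_mul _)).1.symm

end MonoidAlgebra

theorem stmt_1_general (R : Type*) (G : Type*) [Ring R] [IsDomain R] [Group G]
    (h2up : LeftTwoUniqueProducts G)
    (a b : MonoidAlgebra R G) (hb : b ≠ 0)
    (hsupp : (a * b).coeff.support ⊆ b.coeff.support) :
    a.coeff.support ⊆ {1} := by
  classical
  intro g hg
  by_contra hg1
  have hcard : 2 ≤ (insert 1 a.coeff.support).card :=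
    Finset.one_lt_card.mpr ⟨1, Finset.mem_insert_self _ _, g, Finset.mem_insert_of_mem hg,
      fun h => hg1 (Finset.mem_singleton.mpr h.symm)⟩
  have hb_ne : b.coeff.support.Nonempty :=
    Finsupp.support_nonempty_iff.mpr fun h => hb (MonoidAlgebra.coeff_eq_zero.mp h)
  obtain ⟨a₁, ha₁, b₁, hb₁, a₂, ha₂, b₂, hb₂, hne, hu₁, hu₂⟩ :=
    h2up _ _ hcard hb_ne
  have h₁ := MonoidAlgebra.eq_one_of_uniqueMul_insert_one hsupp ha₁ hb₁
    fun x y hx hy => hu₁ x hx y hy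
  have h₂ := MonoidAlgebra.eq_one_of_uniqueMul_insert_one hsupp ha₂ hb₂
    fun x y hx hy => hu₂ x hx y hy
  exact hne (h₁.trans h₂.symm)

/-- Lemma `2-unique_prod`: if `G` has left 2-unique products and `R`
is a domain, then `RG` has no left engulfing elements: for nonzero `a, b ∈ RG` with
`supp(a·b) ⊆ supp(b)`, one has `supp(a) ⊆ {1}`, i.e. `a ∈ R`. -/
theorem stmt_1 (R : Type*) (G : Type*) [Ring R] [IsDomain R] [Group G]
    (h2up : LeftTwoUniqueProducts G)
    (a b : MonoidAlgebra R G) (ha : a ≠ 0) (hb : b ≠ 0)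
    (hsupp : (a * b).coeff.support ⊆ b.coeff.support) :
    a.coeff.support ⊆ {1} :=
  stmt_1_general R G h2up a b hb hsupp
end

section
/- If G is a group with left 2-unique products and R is a domain, then the group ring RG is a domain. -/
/-- if `G` has left 2-unique products and `R` is a domain,
then the group ring `RG` is a domain. -/
theorem stmt_2 (R : Type*) (G : Type*) [Ring R] [IsDomain R] [Group G]
    (h2up : LeftTwoUniqueProducts G) :
    IsDomain (MonoidAlgebra R G) := by
  haveI : UniqueProds G := by
    constructor
    intro A B hA hB
    rcases lt_or_ge A.card 2 with h | h
    · obtain ⟨a, ha⟩ := hA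
      obtain ⟨b, hb⟩ := hB
      refine ⟨a, ha, b, hb, ?_⟩
      intro x y hx hy hxy
      have hxa : x = a := Finset.card_le_one.mp (by omega) x hx a ha
      subst hxa
      exact ⟨rfl, mul_left_cancel hxy⟩
    · obtain ⟨a₁, ha₁, b₁, hb₁, _, _, _, _, _, hu, _⟩ := h2up A B h hB
      exact ⟨a₁, ha₁, b₁, hb₁, fun x y hx hy hxy => hu x hx y hy hxy⟩
  exact NoZeroDivisors.to_isDomain _
end

section
/- If a group G is right orderable, then G has left 2-unique products: for any finite subsets A, B ⊆ G with |A| ≥ 2 and B nonempty, there exist elements a₁b₁, a₂b₂ ∈ AB uniquely represented as products in AB with a₁ ≠ a₂. -/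
/-- part of Lemma `ro`: a right orderable group has left 2-unique
products.  A group is right orderable if it admits a total (linear) order such
that `a < b` implies `a * g < b * g` for all `g`. -/
theorem stmt_3 (G : Type*) [Group G]
    (hro : ∃ r : LinearOrder G, ∀ a b : G, r.lt a b → ∀ g : G, r.lt (a * g) (b * g)) :
    LeftTwoUniqueProducts G := by
  obtain ⟨r, hr⟩ := hro
  letI := r
  intro A B hA hB
  have hAne : A.Nonempty := Finset.card_pos.mp (by omega)
  set P := (A ×ˢ B).image (fun p => p.1 * p.2) with hP
  have hmemP : ∀ a ∈ A, ∀ b ∈ B, a * b ∈ P := fun a ha b hb =>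
    Finset.mem_image.mpr ⟨(a, b), Finset.mem_product.mpr ⟨ha, hb⟩, rfl⟩
  obtain ⟨a0, ha0⟩ := hAne
  obtain ⟨b0, hb0⟩ := hB
  have hPne : P.Nonempty := ⟨a0 * b0, hmemP a0 ha0 b0 hb0⟩
  obtain ⟨⟨a₁, b₁⟩, hp1, hx1⟩ := Finset.mem_image.mp (P.max'_mem hPne)
  obtain ⟨⟨a₂, b₂⟩, hp2, hx2⟩ := Finset.mem_image.mp (P.min'_mem hPne)
  obtain ⟨ha₁, hb₁⟩ := Finset.mem_product.mp hp1
  obtain ⟨ha₂, hb₂⟩ := Finset.mem_product.mp hp2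
  simp only at hx1 hx2
  have hmax : ∀ a ∈ A, a ≤ a₁ := by
    intro a ha
    by_contra h
    push_neg at h
    have hlt : a₁ * b₁ < a * b₁ := hr a₁ a h b₁
    exact absurd (hx1 ▸ P.le_max' _ (hmemP a ha b₁ hb₁)) (not_le.mpr hlt)
  have hmin : ∀ a ∈ A, a₂ ≤ a := by
    intro a ha
    by_contra h
    push_neg at h
    have hlt : a * b₂ < a₂ * b₂ := hr a a₂ h b₂
    exact absurd (hx2 ▸ P.min'_le _ (hmemP a ha b₂ hb₂)) (not_le.mpr hlt)
  refine ⟨a₁, ha₁, b₁, hb₁, a₂, ha₂, b₂, hb₂, ?_, ?_, ?_⟩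
  · obtain ⟨c, hc, d, hd, hcd⟩ := Finset.one_lt_card.mp hA
    intro h
    have hc1 : c = a₁ := le_antisymm (hmax c hc) (h ▸ hmin c hc)
    have hd1 : d = a₁ := le_antisymm (hmax d hd) (h ▸ hmin d hd)
    exact hcd (hc1.trans hd1.symm)
  · intro a ha b hb hab
    have haa : a = a₁ := by
      rcases lt_or_eq_of_le (hmax a ha) with h | h
      · have hlt : a * b < a₁ * b := hr a a₁ h b
        have hle : a₁ * b ≤ a₁ * b₁ := hx1 ▸ P.le_max' _ (hmemP a₁ ha₁ b hb)
        exact absurd (hab ▸ lt_of_lt_of_le hlt hle) (lt_irrefl _)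
      · exact h
    exact ⟨haa, mul_left_cancel (haa ▸ hab)⟩
  · intro a ha b hb hab
    have haa : a = a₂ := by
      rcases lt_or_eq_of_le (hmin a ha) with h | h
      · have hlt : a₂ * b < a * b := hr a₂ a h b
        have hle : a₂ * b₂ ≤ a₂ * b := hx2 ▸ P.min'_le _ (hmemP a₂ ha₂ b hb)
        exact absurd (hab ▸ lt_of_le_of_lt hle hlt) (lt_irrefl _)
      · exact h.symm
    exact ⟨haa, mul_left_cancel (haa ▸ hab)⟩
end

section
/- Let R be a domain and G a right orderable group. Then the group of units of the group ring RG is exactly {u·g : u ∈ R×, g ∈ G}, i.e., all units are trivial. -/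
/-!
A right order on `G` gives it the two-unique-products property: for finite nonempty
`A, B ⊆ G` with `|A| |B| > 1`, at least two distinct pairs `(a, b) ∈ A × B` are the only way
to write `a * b` as such a product. If `f * g = 1` in `R[G]` with `R` a domain, the coefficient
of `f * g` at such a product is a product of two nonzero coefficients, so both products lie in
the support `{1}` of `1`, which contradicts their uniqueness. Hence `f` and `g` are monomials.
-/

open Finset

namespace MonoidAlgebra

variable {R A : Type*} [Semiring R]

theorem card_support_eq_one_of_mul_eq_one [NoZeroDivisors R] [Nontrivial R] [MulOneClass A]
    [TwoUniqueProds A] {f g : R[A]} (h : f * g = 1) :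
    #f.coeff.support = 1 ∧ #g.coeff.support = 1 := by
  have hf : f.coeff.support.Nonempty := by
    rw [Finsupp.support_nonempty_iff, ne_eq, coeff_eq_zero]
    rintro rfl
    simp at h
  have hg : g.coeff.support.Nonempty := by
    rw [Finsupp.support_nonempty_iff, ne_eq, coeff_eq_zero]
    rintro rfl
    simp at h
  suffices #f.coeff.support * #g.coeff.support ≤ 1 by
    have := hf.card_pos
    have := hg.card_pos
    constructor <;> nlinarith
  by_contra! hlt
  obtain ⟨p, hp, q, hq, hne, hup, huq⟩ := TwoUniqueProds.uniqueMul_of_one_lt_card hlt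
  rw [mem_product] at hp hq
  have eq_one {a b : A} (hu : UniqueMul f.coeff.support g.coeff.support a b)
      (ha : a ∈ f.coeff.support) (hb : b ∈ g.coeff.support) : a * b = 1 := by
    have : a * b ∈ (f * g).coeff.support := by
      rw [Finsupp.mem_support_iff, coeff_mul_mul_of_uniqueMul hu]
      exact mul_ne_zero (Finsupp.mem_support_iff.mp ha) (Finsupp.mem_support_iff.mp hb)
    simpa [h] using this
  obtain ⟨h₁, h₂⟩ := hup hq.1 hq.2 (by rw [eq_one hup hp.1 hp.2, eq_one huq hq.1 hq.2])
  exact hne (Prod.ext h₁.symm h₂.symm)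

theorem exists_eq_single_of_card_support_eq_one {x : R[A]} (hx : #x.coeff.support = 1) :
    ∃ a r, x = single a r := by
  obtain ⟨a, r, -, hx⟩ := Finsupp.card_support_eq_one'.mp hx
  exact ⟨a, r, coeff_injective hx⟩

theorem mul_eq_one_of_single_mul_single_eq_one [Nontrivial R] [MulOneClass A] {a b : A} {r s : R}
    (h : single a r * single b s = 1) : r * s = 1 := by
  rw [single_mul_single, one_def, single_inj] at h
  exact (h.resolve_right fun h ↦ one_ne_zero h.2).2

theorem isUnit_iff_exists_single [NoZeroDivisors R] [Nontrivial R] {G : Type*} [Group G]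
    [TwoUniqueProds G] {x : R[G]} : IsUnit x ↔ ∃ (u : Rˣ) (g : G), x = single g (u : R) := by
  constructor
  · rintro ⟨⟨x, y, hxy, hyx⟩, rfl⟩
    obtain ⟨hx, hy⟩ := card_support_eq_one_of_mul_eq_one hxy
    obtain ⟨g, r, rfl⟩ := exists_eq_single_of_card_support_eq_one hx
    obtain ⟨k, s, rfl⟩ := exists_eq_single_of_card_support_eq_one hy
    exact ⟨⟨r, s, mul_eq_one_of_single_mul_single_eq_one hxy,
      mul_eq_one_of_single_mul_single_eq_one hyx⟩, g, rfl⟩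
  · rintro ⟨u, g, rfl⟩
    exact ⟨⟨single g u, single g⁻¹ ↑u⁻¹, by simp [one_def], by simp [one_def]⟩, rfl⟩

end MonoidAlgebra

/-- if `R` is a domain and `G` is a right orderable group, then all
units of the group ring `RG` are trivial: they are exactly the elements
`u·g` with `u ∈ Rˣ` and `g ∈ G`. -/
theorem stmt_4 (R : Type*) (G : Type*) [Ring R] [IsDomain R] [Group G]
    (hro : ∃ r : LinearOrder G, ∀ a b : G, r.lt a b → ∀ g : G, r.lt (a * g) (b * g))
    (x : MonoidAlgebra R G) :
    IsUnit x ↔ ∃ (u : Rˣ) (g : G), x = MonoidAlgebra.single g (u : R) := by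
  obtain ⟨r, hr⟩ := hro
  let := r
  have : MulRightStrictMono G := ⟨fun g _ _ h ↦ hr _ _ h g⟩
  -- `TwoUniqueProds G` is found by the instance `TwoUniqueProds.of_covariant_left`
  exact MonoidAlgebra.isUnit_iff_exists_single
end

section
/- Let F be a free group, N ⊴ P ⊴ F normal subgroups of F with N ≤ P, let R be a ring, and let W ⊆ N be a normal generating set for N in F. Set H = F/P and let P_R = R ⊗_ℤ (P/[P,P]) be the R-relation module of the presentation H = F/P. Then H₁(P/N, R) = 0 if and only if the image of W generates P_R as a left RH-module. -/
open scoped TensorProduct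

/-- Lemma `generating_lemma`: let `F` be a free group, `N ≤ P`
normal subgroups of `F`, `R` a ring and `W` a normal generating set for `N`.
Then `H₁(P/N, R) = 0` (i.e. `R ⊗_ℤ (P/N)_{ab}` is trivial) if and only if the
image of `W` generates the `R`-relation module `P_R = R ⊗_ℤ P_{ab}` as a left
`RH`-module for `H = F/P`: the latter is expressed by saying that the additive
subgroup of `R ⊗_ℤ P_{ab}` generated by all `r ⊗ (f w f⁻¹)[P,P]`, with `r ∈ R`,
`f ∈ F` and `w ∈ W`, is everything. -/
theorem stmt_10 (S : Type*) (R : Type*) [Ring R]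
    (N P : Subgroup (FreeGroup S)) [N.Normal] [P.Normal] [(N.subgroupOf P).Normal]
    (hNP : N ≤ P)
    (W : Set (FreeGroup S)) (hW : Subgroup.normalClosure W = N) :
    Subsingleton (TensorProduct ℤ R (Additive (Abelianization (↥P ⧸ N.subgroupOf P)))) ↔
      AddSubgroup.closure
        {x : TensorProduct ℤ R (Additive (Abelianization ↥P)) |
          ∃ (r : R) (f : FreeGroup S) (p : ↥P),
            (∃ w ∈ W, (p : FreeGroup S) = f * w * f⁻¹) ∧
            x = r ⊗ₜ[ℤ] Additive.ofMul (Abelianization.of p)} = ⊤ := by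
  classical
  set Gen : Set (TensorProduct ℤ R (Additive (Abelianization ↥P))) :=
    {x : TensorProduct ℤ R (Additive (Abelianization ↥P)) |
      ∃ (r : R) (f : FreeGroup S) (p : ↥P),
        (∃ w ∈ W, (p : FreeGroup S) = f * w * f⁻¹) ∧
        x = r ⊗ₜ[ℤ] Additive.ofMul (Abelianization.of p)} with hGen
  set C : AddSubgroup (TensorProduct ℤ R (Additive (Abelianization ↥P))) :=
    AddSubgroup.closure Gen with hC
  set π : ↥P →* ↥P ⧸ N.subgroupOf P := QuotientGroup.mk' (N.subgroupOf P) with hπ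
  set q : Abelianization ↥P →* Abelianization (↥P ⧸ N.subgroupOf P) :=
    Abelianization.map π with hq
  set g : Additive (Abelianization ↥P) →ₗ[ℤ]
      Additive (Abelianization (↥P ⧸ N.subgroupOf P)) :=
    (MonoidHom.toAdditive q).toIntLinearMap with hg
  have hgapp : ∀ b : Abelianization ↥P, g (Additive.ofMul b) = Additive.ofMul (q b) :=
    fun b => rfl
  have hgsurj : Function.Surjective g := by
    intro b
    obtain ⟨y, rfl⟩ : ∃ y, Additive.ofMul y = b := ⟨Additive.toMul b, rfl⟩
    obtain ⟨z, rfl⟩ : ∃ z, Abelianization.of z = y := by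
      refine Quot.inductionOn y fun z => ⟨z, rfl⟩
    obtain ⟨p, rfl⟩ := QuotientGroup.mk'_surjective (N.subgroupOf P) z
    exact ⟨Additive.ofMul (Abelianization.of p), by
      rw [hgapp, hq, Abelianization.map_of]⟩
  set Φ := LinearMap.lTensor R g with hΦ
  have hΦsurj : Function.Surjective Φ := LinearMap.lTensor_surjective R hgsurj
  -- membership of N-elements in C
  have keymem : ∀ (m : FreeGroup S) (hm : m ∈ N) (h : m ∈ P) (r : R),
      r ⊗ₜ[ℤ] Additive.ofMul (Abelianization.of (⟨m, h⟩ : ↥P)) ∈ C := by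
    intro m hm
    rw [← hW] at hm
    have hm' : m ∈ Subgroup.closure (Group.conjugatesOfSet W) := hm
    refine Subgroup.closure_induction
      (p := fun m _ => ∀ (h : m ∈ P) (r : R),
        r ⊗ₜ[ℤ] Additive.ofMul (Abelianization.of (⟨m, h⟩ : ↥P)) ∈ C) ?_ ?_ ?_ ?_ hm'
    · intro x hx h r
      obtain ⟨w, hwW, hconj⟩ := Group.mem_conjugatesOfSet_iff.1 hx
      obtain ⟨c, hc⟩ := isConj_iff.1 hconj
      exact AddSubgroup.subset_closure ⟨r, c, ⟨x, h⟩, ⟨w, hwW, hc.symm⟩, rfl⟩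
    · intro h r
      have : (⟨(1 : FreeGroup S), h⟩ : ↥P) = 1 := rfl
      rw [this, map_one]
      simpa using (zero_mem C)
    · intro x y hx hy ihx ihy h r
      have hxP : x ∈ P := hNP (hW ▸ hx)
      have hyP : y ∈ P := hNP (hW ▸ hy)
      have : (⟨x * y, h⟩ : ↥P) = ⟨x, hxP⟩ * ⟨y, hyP⟩ := rfl
      rw [this, map_mul]
      have : Additive.ofMul (Abelianization.of (⟨x, hxP⟩ : ↥P) *
          Abelianization.of (⟨y, hyP⟩ : ↥P)) =
          Additive.ofMul (Abelianization.of (⟨x, hxP⟩ : ↥P)) +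
          Additive.ofMul (Abelianization.of (⟨y, hyP⟩ : ↥P)) := rfl
      rw [this, TensorProduct.tmul_add]
      exact add_mem (ihx hxP r) (ihy hyP r)
    · intro x hx ihx h r
      have hxP : x ∈ P := hNP (hW ▸ hx)
      have : (⟨x⁻¹, h⟩ : ↥P) = (⟨x, hxP⟩ : ↥P)⁻¹ := rfl
      rw [this, map_inv]
      have : Additive.ofMul (Abelianization.of (⟨x, hxP⟩ : ↥P))⁻¹ =
          -Additive.ofMul (Abelianization.of (⟨x, hxP⟩ : ↥P)) := rfl
      rw [this, TensorProduct.tmul_neg]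
      exact neg_mem (ihx hxP r)
  -- kernel elements tensor into C
  have kermem : ∀ (a : Additive (Abelianization ↥P)), g a = 0 → ∀ r : R,
      r ⊗ₜ[ℤ] a ∈ C := by
    intro a ha r
    obtain ⟨b, rfl⟩ : ∃ b, Additive.ofMul b = a := ⟨Additive.toMul a, rfl⟩
    obtain ⟨p, rfl⟩ : ∃ p : ↥P, Abelianization.of p = b := by
      refine Quot.inductionOn b fun p => ⟨p, rfl⟩
    have ha' : q (Abelianization.of p) = 1 := by
      have := ha; rw [hgapp] at this
      exact Additive.ofMul.injective (by simpa using this)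
    rw [hq, Abelianization.map_of] at ha'
    have hπp : π p ∈ commutator (↥P ⧸ N.subgroupOf P) :=
      (QuotientGroup.eq_one_iff (π p)).mp ha'
    have hcomm : commutator (↥P ⧸ N.subgroupOf P) = (commutator ↥P).map π := by
      rw [commutator, commutator, Subgroup.map_commutator,
        Subgroup.map_top_of_surjective π (QuotientGroup.mk'_surjective _)]
    rw [hcomm] at hπp
    obtain ⟨c, hc, hcp⟩ := hπp
    have hn : c⁻¹ * p ∈ N.subgroupOf P := by
      rw [← QuotientGroup.ker_mk' (N.subgroupOf P)]
      show π (c⁻¹ * p) = 1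
      rw [map_mul, map_inv, hcp, inv_mul_cancel]
    have hp : p = c * (c⁻¹ * p) := by group
    have hofc : Abelianization.of c = 1 :=
      (QuotientGroup.eq_one_iff c).mpr hc
    have hof : Abelianization.of p = Abelianization.of (c⁻¹ * p) := by
      rw [hp, map_mul, hofc, one_mul, ← hp]
    rw [hof]
    have hmem : ((c⁻¹ * p : ↥P) : FreeGroup S) ∈ N := hn
    have : (c⁻¹ * p : ↥P) = ⟨((c⁻¹ * p : ↥P) : FreeGroup S), (c⁻¹ * p : ↥P).2⟩ := rfl
    rw [this]
    exact keymem _ hmem _ r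
  constructor
  · intro hsub
    rw [eq_top_iff]
    intro x hxtop
    clear hxtop
    have hx0 : Φ x = 0 := Subsingleton.elim _ _
    have hexact : Function.Exact (LinearMap.ker g).subtype g := by
      rw [LinearMap.exact_iff, Submodule.range_subtype]
    have := lTensor_exact R hexact hgsurj
    obtain ⟨y, rfl⟩ := (this x).mp hx0
    clear hx0
    induction y using TensorProduct.induction_on with
    | zero => rw [map_zero]; exact zero_mem C
    | tmul r k =>
      rw [LinearMap.lTensor_tmul]
      exact kermem k.1 k.2 r
    | add u v ihu ihv =>
      rw [map_add]
      exact add_mem ihu ihv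
  · intro htop
    have hΦ0 : ∀ x, Φ x = 0 := by
      intro x
      have hx : x ∈ C := htop ▸ AddSubgroup.mem_top x
      refine AddSubgroup.closure_induction ?_ (map_zero Φ) ?_ ?_ hx
      · rintro t ⟨r, f, p, ⟨w, hwW, hpw⟩, rfl⟩
        have hwN : w ∈ N := hW ▸ Subgroup.subset_normalClosure hwW
        have hpN : (p : FreeGroup S) ∈ N := by
          rw [hpw]
          exact Subgroup.Normal.conj_mem ‹N.Normal› w hwN f
        have hπp : π p = 1 := (QuotientGroup.eq_one_iff p).mpr hpN
        rw [hΦ, LinearMap.lTensor_tmul, hgapp, hq, Abelianization.map_of, hπp, map_one]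
        exact TensorProduct.tmul_zero _ r
      · intro a b _ _ ha hb
        rw [map_add, ha, hb, add_zero]
      · intro a _ ha
        rw [map_neg, ha, neg_zero]
    refine subsingleton_of_forall_eq 0 fun z => ?_
    obtain ⟨x, rfl⟩ := hΦsurj z
    exact hΦ0 x
end

section
/- Let R be a ring, G a group, and F a free left RG-module with basis B. If RG contains no left engulfing elements (with respect to the basis {1}), then F contains no left engulfing elements with respect to B: for every nonzero m ∈ F and every r ∈ RG with supp_B(r·m) ⊆ supp_B(m), one has r ∈ R. -/
section

variable {R G B : Type*} [Ring R] [Group G]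

/-- The support `supp_B(m) ⊆ G × B` of an element `m` of the free `RG`-module
`F = ⊕_{b ∈ B} RG` with basis `B`: the pair `(g, b)` lies in the support iff
`g` lies in the support of the `b`-th coordinate of `m`. -/
def suppB (m : B →₀ MonoidAlgebra R G) : Set (G × B) :=
  {p | p.1 ∈ (m p.2).coeff.support}

end

theorem suppB_smul_subset_iff {R G B : Type*} [Ring R] [Group G]
    {m : B →₀ MonoidAlgebra R G} {r : MonoidAlgebra R G} :
    suppB (r • m) ⊆ suppB m ↔ ∀ b, (r * m b).coeff.support ⊆ (m b).coeff.support := by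
  constructor
  · intro h b g hg
    exact h (show (g, b) ∈ suppB (r • m) from hg)
  · rintro h ⟨g, b⟩ hg
    exact h b hg

/-- let `F` be a free left `RG`-module with basis `B` (realised as
`B →₀ RG`).  If `RG` contains no left engulfing elements (with respect to the
basis `{1}`), then `F` contains no left engulfing elements with respect to `B`:
for every nonzero `m ∈ F` and every `r ∈ RG` with `supp_B(r·m) ⊆ supp_B(m)`,
one has `r ∈ R` (i.e. `supp(r) ⊆ {1}`). -/
theorem stmt_17 (R G B : Type*) [Ring R] [Group G]
    (hRG : ∀ a : MonoidAlgebra R G, a ≠ 0 → ∀ r : MonoidAlgebra R G,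
      (r * a).coeff.support ⊆ a.coeff.support → (r.coeff.support : Set G) ⊆ {1})
    (m : B →₀ MonoidAlgebra R G) (hm : m ≠ 0)
    (r : MonoidAlgebra R G) (h : suppB (r • m) ⊆ suppB m) :
    (r.coeff.support : Set G) ⊆ {1} := by
  obtain ⟨b, hb⟩ := Finsupp.ne_iff.mp hm
  exact hRG (m b) hb r (suppB_smul_subset_iff.mp h b)
end

section
/- Let n ≥ 2 and let Q_n = ⟨a, t | [tat⁻¹, a] = 1, aⁿ = 1⟩. Then Q_n contains a subgroup isomorphic to ℤ/nℤ × ℤ/nℤ, and hence Q_n is not a one-relator group (since any torsion subgroup of a one-relator group is cyclic, being contained in a conjugate of the cyclic group generated by the root of the relator). -/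
open scoped commutatorElement

/-- The group `Q_n = ⟨a, t ∣ [tat⁻¹, a] = 1, aⁿ = 1⟩`, presented on two
generators `a` (encoded by `true`) and `t` (encoded by `false`). -/
def QnRels (n : ℕ) : Set (FreeGroup Bool) :=
  {⁅FreeGroup.of false * FreeGroup.of true * (FreeGroup.of false)⁻¹, FreeGroup.of true⁆,
    (FreeGroup.of true) ^ n}

/-!
The elements `a` and `tat⁻¹` commute and have order dividing `n`, so they span a quotient of
`ℤ/n × ℤ/n`; it is all of `ℤ/n × ℤ/n` because `Q_n` acts on `ℤ/n × ℤ/n` with `a` translating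
by `(1, 0)` and `t` swapping the coordinates, so that `aⁱ (tat⁻¹)ʲ` translates by `(i, j)`.

Suppose `Q_n ≅ F/R` with `R = ⟪w⟫`. If `w ∈ [F, F]`, the abelianization of `F/R` is that of
`F`, which is free abelian, so every torsion element of `F/R` is a product of commutators;
but `a` has finite order and maps onto `1 ∈ ℤ/n`. If `w ∉ [F, F]`, then `w` has infinite order
modulo `[F, F]`, and since `R/[F, R]` is central in `F/[F, R]`, hence generated by `w`, this
forces `R ∩ [F, F] = [F, R]`. This vanishing of Hopf's `H₂ = (R ∩ [F, F])/[F, R]` does not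
depend on the presentation, because lifts between two free presentations of the same group
move commutators only by `[F, R]`. It fails for the defining presentation of `Q_n`:
the relator `[tat⁻¹, a]` is not in `[F, R]`, as one sees by mapping `F` to the extension
`Heis(ℤ/n) ⋊ ℤ` in which all relators of `Q_n` become central and `[tat⁻¹, a]` is not trivial.
-/

open Subgroup

theorem exists_monoidHom_zmod_prod {G : Type*} [Group G] {n : ℕ} {x y : G} (hx : x ^ n = 1)
    (hy : y ^ n = 1) (hxy : Commute x y) :
    ∃ ψ : Multiplicative (ZMod n × ZMod n) →* G,
      ∀ i j : ℤ, ψ (.ofAdd (i, j)) = x ^ i * y ^ j := by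
  have lift {z : G} (hz : z ^ n = 1) :
      ∃ f : ZMod n →+ Additive G, ∀ i : ℤ, f i = .ofMul (z ^ i) :=
    ⟨ZMod.lift n ⟨zmultiplesHom _ (.ofMul z), by simp [← ofMul_pow, hz]⟩, fun i => by simp⟩
  obtain ⟨f, hf⟩ := lift hx
  obtain ⟨g, hg⟩ := lift hy
  have hfg : ∀ a b, AddCommute (f a) (g b) := by
    intro a b
    obtain ⟨i, rfl⟩ := ZMod.intCast_surjective a
    obtain ⟨j, rfl⟩ := ZMod.intCast_surjective b
    rw [hf, hg]
    exact hxy.zpow_zpow i j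
  exact ⟨AddMonoidHom.toMultiplicativeLeft (f.noncommCoprod g hfg), fun i j => by
    simp [AddMonoidHom.toMultiplicativeLeft, hf, hg]⟩

theorem MonoidHom.map_mem_commutator {G H : Type*} [Group G] [Group H] (f : G →* H) {x : G}
    (hx : x ∈ commutator G) : f x ∈ commutator H := by
  rw [← Abelianization.ker_of, MonoidHom.mem_ker] at hx ⊢
  rw [← Abelianization.map_of, hx, map_one]

theorem commutator_top_le_ker_of_le_comap_center {G H : Type*} [Group G] [Group H]
    {f : G →* H} {R : Subgroup G} (hR : R ≤ (center H).comap f) :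
    ⁅(⊤ : Subgroup G), R⁆ ≤ f.ker := by
  rw [commutator_le]
  intro g _ r hr
  rw [MonoidHom.mem_ker, map_commutatorElement, commutatorElement_eq_one_iff_commute]
  exact mem_center_iff.mp (hR hr) (f g)

theorem QuotientGroup.mk_mem_center_of_mem {G : Type*} [Group G] {H : Subgroup G} [H.Normal]
    {x : G} (hx : x ∈ H) :
    (x : G ⧸ ⁅(⊤ : Subgroup G), H⁆) ∈ center (G ⧸ ⁅(⊤ : Subgroup G), H⁆) := by
  refine mem_center_iff.mpr fun g => ?_
  obtain ⟨g, rfl⟩ := QuotientGroup.mk_surjective g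
  rw [← QuotientGroup.mk_mul, ← QuotientGroup.mk_mul, QuotientGroup.eq,
    show (g * x)⁻¹ * (x * g) = ⁅x⁻¹, g⁻¹⁆ by group, commutator_comm]
  exact commutator_mem_commutator (H.inv_mem hx) trivial

theorem Subgroup.normalClosure_singleton_le_zpowers {G : Type*} [Group G] {c : G}
    (hc : c ∈ center G) : normalClosure {c} ≤ zpowers c := by
  have : (zpowers c).Normal := ⟨fun a ha g => by
    rwa [mem_center_iff.mp (zpowers_le.mpr hc ha) g, mul_inv_cancel_right]⟩
  exact normalClosure_le_normal (by simp)

theorem mul_inv_mem_commutator_top_of_mem_commutator {G : Type*} [Group G] {R : Subgroup G}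
    [R.Normal] {θ : G →* G} (hθ : ∀ x, θ x * x⁻¹ ∈ R) {x : G} (hx : x ∈ commutator G) :
    θ x * x⁻¹ ∈ ⁅(⊤ : Subgroup G), R⁆ := by
  set D := ⁅(⊤ : Subgroup G), R⁆
  have hcen (x : G) : (θ x : G ⧸ D) * (x : G ⧸ D)⁻¹ ∈ center (G ⧸ D) :=
    QuotientGroup.mk_mem_center_of_mem (hθ x)
  -- `x ↦ θ x * x⁻¹` is a homomorphism modulo `D` because its values are central there
  let η : G →* G ⧸ D :=
    { toFun x := θ x * (x : G ⧸ D)⁻¹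
      map_one' := by simp
      map_mul' x y := by
        simp only [map_mul, QuotientGroup.mk_mul, mul_inv_rev]
        rw [mul_assoc _ (x : G ⧸ D)⁻¹, mem_center_iff.mp (hcen y) (x : G ⧸ D)⁻¹]
        group }
  have hη : commutator G ≤ η.ker := by
    rw [commutator_def, commutator_le]
    intro a _ b _
    rw [MonoidHom.mem_ker, map_commutatorElement, commutatorElement_eq_one_iff_commute]
    exact mem_center_iff.mp (hcen b) (η a)
  refine (QuotientGroup.eq_one_iff _).mp ?_
  rw [QuotientGroup.mk_mul, QuotientGroup.mk_inv]
  exact hη hx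

theorem PresentedGroup.ker_mk {α : Type*} (rels : Set (FreeGroup α)) :
    (PresentedGroup.mk rels).ker = normalClosure rels :=
  QuotientGroup.ker_mk' _

theorem FreeGroup.exists_comp_eq {α H G : Type*} [Group H] [Group G] {p : H →* G}
    (hp : Function.Surjective p) (f : FreeGroup α →* G) :
    ∃ φ : FreeGroup α →* H, p.comp φ = f :=
  ⟨FreeGroup.lift (Function.surjInv hp ∘ f ∘ FreeGroup.of),
    FreeGroup.ext_hom _ _ fun a => by simp [Function.surjInv_eq hp]⟩

theorem ker_inf_commutator_le_of_surjective {α β G : Type*} [Group G]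
    {p₁ : FreeGroup α →* G} {p₂ : FreeGroup β →* G}
    (hp₁ : Function.Surjective p₁) (hp₂ : Function.Surjective p₂)
    (h₂ : p₂.ker ⊓ commutator (FreeGroup β) ≤ ⁅(⊤ : Subgroup (FreeGroup β)), p₂.ker⁆) :
    p₁.ker ⊓ commutator (FreeGroup α) ≤ ⁅(⊤ : Subgroup (FreeGroup α)), p₁.ker⁆ := by
  obtain ⟨φ, hφ⟩ := FreeGroup.exists_comp_eq hp₂ p₁
  obtain ⟨ψ, hψ⟩ := FreeGroup.exists_comp_eq hp₁ p₂
  intro x hx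
  obtain ⟨hxker, hxcomm⟩ := mem_inf.mp hx
  have hφx : φ x ∈ p₂.ker ⊓ commutator (FreeGroup β) :=
    mem_inf.mpr ⟨by rwa [MonoidHom.mem_ker, ← MonoidHom.comp_apply, hφ],
      φ.map_mem_commutator hxcomm⟩
  have hψ_le : ⁅(⊤ : Subgroup (FreeGroup β)), p₂.ker⁆.map ψ ≤
      ⁅(⊤ : Subgroup (FreeGroup α)), p₁.ker⁆ := by
    rw [map_commutator]
    refine commutator_mono le_top ?_
    rintro _ ⟨y, hy, rfl⟩
    rwa [MonoidHom.mem_ker, ← MonoidHom.comp_apply, hψ]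
  have hθ : ∀ y, ψ.comp φ y * y⁻¹ ∈ p₁.ker := fun y => by
    rw [MonoidHom.mem_ker, map_mul, map_inv, ← MonoidHom.comp_apply, ← MonoidHom.comp_assoc,
      hψ, hφ, mul_inv_cancel]
  have hθx := mul_inv_mem_commutator_top_of_mem_commutator hθ hxcomm
  have hψφx : ψ (φ x) ∈ ⁅(⊤ : Subgroup (FreeGroup α)), p₁.ker⁆ :=
    hψ_le (mem_map_of_mem ψ (h₂ hφx))
  simpa using mul_mem (inv_mem hθx) hψφx

theorem normalClosure_singleton_inf_commutator_le {G : Type*} [Group G] {w : G}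
    (hw : ¬IsOfFinOrder (Abelianization.of w)) :
    normalClosure {w} ⊓ commutator G ≤ ⁅(⊤ : Subgroup G), normalClosure {w}⁆ := by
  set D := ⁅(⊤ : Subgroup G), normalClosure {w}⁆
  intro x hx
  obtain ⟨hxw, hxcomm⟩ := mem_inf.mp hx
  have hw_cen : (w : G ⧸ D) ∈ center (G ⧸ D) :=
    QuotientGroup.mk_mem_center_of_mem (subset_normalClosure (Set.mem_singleton w))
  have hx_pow : (x : G ⧸ D) ∈ zpowers (w : G ⧸ D) := by
    refine normalClosure_singleton_le_zpowers hw_cen ?_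
    rw [← Set.image_singleton, ← QuotientGroup.coe_mk',
      ← map_normalClosure _ _ (QuotientGroup.mk'_surjective D)]
    exact mem_map_of_mem _ hxw
  obtain ⟨k, hk⟩ := mem_zpowers_iff.mp hx_pow
  have hD : D ≤ (Abelianization.of : G →* _).ker := by
    rw [Abelianization.ker_of, commutator_def]
    exact commutator_mono le_top le_top
  have hx1 : Abelianization.of x = 1 := by rwa [← MonoidHom.mem_ker, Abelianization.ker_of]
  have hk0 : k = 0 := by
    have hwk := congrArg (QuotientGroup.lift _ _ hD) hk
    rw [map_zpow, QuotientGroup.lift_mk, QuotientGroup.lift_mk, hx1,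
      ← orderOf_dvd_iff_zpow_eq_one, orderOf_eq_zero_iff.mpr hw] at hwk
    exact_mod_cast zero_dvd_iff.mp hwk
  rwa [hk0, zpow_zero, eq_comm, QuotientGroup.eq_one_iff] at hk

instance FreeGroup.isMulTorsionFree_abelianization {α : Type*} :
    IsMulTorsionFree (Abelianization (FreeGroup α)) :=
  Function.Injective.isMulTorsionFree
    (AddEquiv.toMultiplicative (FreeAbelianGroup.equivFinsupp α)).toMonoidHom
    (FreeAbelianGroup.equivFinsupp α).injective

theorem mem_commutator_of_isOfFinOrder {G : Type*} [Group G]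
    [IsMulTorsionFree (Abelianization G)] {w : G} (hw : w ∈ commutator G)
    {g : G ⧸ normalClosure {w}} (hg : IsOfFinOrder g) :
    g ∈ commutator (G ⧸ normalClosure {w}) := by
  obtain ⟨x, rfl⟩ := QuotientGroup.mk_surjective g
  have hle : normalClosure {w} ≤ (Abelianization.of : G →* _).ker := by
    rw [Abelianization.ker_of]
    exact normalClosure_le_normal (Set.singleton_subset_iff.mpr hw)
  have hx : Abelianization.of x = 1 := by
    simpa using ((QuotientGroup.lift _ _ hle).isOfFinOrder hg).eq_one'
  refine (QuotientGroup.mk' _).map_mem_commutator ?_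
  rwa [← Abelianization.ker_of]

-- `⟨x, y, z⟩` is the unitriangular matrix `!![1, x, z; 0, 1, y; 0, 0, 1]`.
@[ext] structure Heis (n : ℕ) where
  x : ZMod n
  y : ZMod n
  z : ZMod n

namespace Heis

variable {n : ℕ}

instance : Mul (Heis n) := ⟨fun a b => ⟨a.x + b.x, a.y + b.y, a.z + b.z + a.x * b.y⟩⟩
instance : One (Heis n) := ⟨⟨0, 0, 0⟩⟩
instance : Inv (Heis n) := ⟨fun a => ⟨-a.x, -a.y, a.x * a.y - a.z⟩⟩

@[simp] theorem mul_x (a b : Heis n) : (a * b).x = a.x + b.x := rfl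
@[simp] theorem mul_y (a b : Heis n) : (a * b).y = a.y + b.y := rfl
@[simp] theorem mul_z (a b : Heis n) : (a * b).z = a.z + b.z + a.x * b.y := rfl
@[simp] theorem one_x : (1 : Heis n).x = 0 := rfl
@[simp] theorem one_y : (1 : Heis n).y = 0 := rfl
@[simp] theorem one_z : (1 : Heis n).z = 0 := rfl
@[simp] theorem inv_x (a : Heis n) : a⁻¹.x = -a.x := rfl
@[simp] theorem inv_y (a : Heis n) : a⁻¹.y = -a.y := rfl
@[simp] theorem inv_z (a : Heis n) : a⁻¹.z = a.x * a.y - a.z := rfl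

instance : Group (Heis n) where
  mul_assoc a b c := by ext <;> simp <;> ring
  one_mul a := by ext <;> simp
  mul_one a := by ext <;> simp
  inv_mul_cancel a := by ext <;> simp

def rot : MulAut (Heis n) where
  toFun p := ⟨-p.y, p.x, p.z - p.x * p.y⟩
  invFun p := ⟨p.y, -p.x, p.z - p.x * p.y⟩
  left_inv p := by ext <;> simp; ring
  right_inv p := by ext <;> simp; ring
  map_mul' p q := by ext <;> simp <;> ring

def A : Heis n := ⟨1, 0, 0⟩
def B : Heis n := ⟨0, 1, 0⟩
def C : Heis n := ⟨0, 0, -1⟩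

theorem rot_A : rot (A : Heis n) = B := by ext <;> simp [rot, A, B]

theorem commutatorElement_B_A : ⁅(B : Heis n), (A : Heis n)⁆ = C := by
  ext <;> simp [commutatorElement_def, A, B, C]

theorem A_pow_n : (A : Heis n) ^ n = 1 := by
  have (k : ℕ) : (A : Heis n) ^ k = ⟨k, 0, 0⟩ := by
    induction k with
    | zero => ext <;> simp
    | succ k ih => rw [pow_succ, ih]; ext <;> simp [A]
  ext <;> simp [this]

theorem C_mem_center : (C : Heis n) ∈ center (Heis n) :=
  mem_center_iff.mpr fun p => by ext <;> simp [C]; ring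

theorem C_ne_one (hn : n ≠ 1) : (C : Heis n) ≠ 1 := by
  have := ZMod.nontrivial_iff.mpr hn
  intro h
  simpa [C] using congrArg Heis.z h

theorem zpow_rot_C (k : ℤ) : (rot ^ k) (C : Heis n) = C := by
  have : rot ∈ MulAction.stabilizer (MulAut (Heis n)) (C : Heis n) := by
    rw [MulAction.mem_stabilizer_iff, MulAut.smul_def]
    ext <;> simp [rot, C]
  simpa [MulAction.mem_stabilizer_iff, MulAut.smul_def] using zpow_mem this k

end Heis

abbrev HeisRot (n : ℕ) := Heis n ⋊[zpowersHom _ Heis.rot] Multiplicative ℤ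

namespace QnRels

variable (n : ℕ)

def commRel : FreeGroup Bool :=
  ⁅FreeGroup.of false * FreeGroup.of true * (FreeGroup.of false)⁻¹, FreeGroup.of true⁆

theorem commRel_mem : commRel ∈ QnRels n := Or.inl rfl

theorem forall_lift_eq_one_iff {G : Type*} [Group G] (f : Bool → G) :
    (∀ r ∈ QnRels n, FreeGroup.lift f r = 1) ↔
      Commute (f false * f true * (f false)⁻¹) (f true) ∧ f true ^ n = 1 := by
  simp [QnRels, map_commutatorElement, commutatorElement_eq_one_iff_commute]

end QnRels

namespace HeisRot

open SemidirectProduct Heis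

variable {n : ℕ}

theorem inl_C_mem_center : inl C ∈ center (HeisRot n) := by
  refine mem_center_iff.mpr fun g => SemidirectProduct.ext ?_ (by simp)
  simp [zpow_rot_C, mem_center_iff.mp C_mem_center]

def ofFree : FreeGroup Bool →* HeisRot n :=
  FreeGroup.lift fun b => if b then inl A else inr (.ofAdd 1)

theorem ofFree_of_true : ofFree (n := n) (.of true) = inl A := by simp [ofFree]

theorem ofFree_of_false : ofFree (n := n) (.of false) = inr (.ofAdd 1) := by simp [ofFree]

theorem ofFree_commRel : ofFree (n := n) QnRels.commRel = inl C := by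
  have : (inr (.ofAdd 1) : HeisRot n) * inl A * (inr (.ofAdd 1))⁻¹ = inl B := by
    rw [← map_inv, ← inl_aut]
    simp [rot_A]
  rw [QnRels.commRel, map_commutatorElement, map_mul, map_mul, map_inv, ofFree_of_true,
    ofFree_of_false, this, ← map_commutatorElement, commutatorElement_B_A]

theorem normalClosure_le_comap_center :
    normalClosure (QnRels n) ≤ (center (HeisRot n)).comap ofFree := by
  refine normalClosure_le_normal ?_
  rintro r (rfl | rfl)
  · rw [SetLike.mem_coe, mem_comap, ← QnRels.commRel, ofFree_commRel]
    exact inl_C_mem_center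
  · rw [SetLike.mem_coe, mem_comap, map_pow, ofFree_of_true, ← map_pow, A_pow_n, map_one]
    exact one_mem _

end HeisRot

theorem QnRels.commRel_not_mem_commutator_top {n : ℕ} (hn : n ≠ 1) :
    commRel ∉ ⁅(⊤ : Subgroup (FreeGroup Bool)), normalClosure (QnRels n)⁆ := fun h => by
  have := commutator_top_le_ker_of_le_comap_center HeisRot.normalClosure_le_comap_center h
  rw [MonoidHom.mem_ker, HeisRot.ofFree_commRel] at this
  exact Heis.C_ne_one hn (SemidirectProduct.inl_injective this)

abbrev Qn (n : ℕ) := PresentedGroup (QnRels n)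

namespace Qn

variable {n : ℕ}

abbrev a : Qn n := .of true
abbrev t : Qn n := .of false

theorem a_pow : (a : Qn n) ^ n = 1 :=
  PresentedGroup.one_of_mem (Or.inr rfl)

theorem commute_conj_a : Commute (t * a * t⁻¹) (a : Qn n) := by
  have := PresentedGroup.one_of_mem (QnRels.commRel_mem n)
  rwa [QnRels.commRel, map_commutatorElement, commutatorElement_eq_one_iff_commute] at this

theorem a_not_mem_commutator (hn : n ≠ 1) : (a : Qn n) ∉ commutator (Qn n) := by
  have := ZMod.nontrivial_iff.mpr hn
  let χ : Qn n →* Multiplicative (ZMod n) :=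
    PresentedGroup.toGroup (f := fun b => if b then .ofAdd 1 else 1) <| by
      rw [QnRels.forall_lift_eq_one_iff]
      exact ⟨Commute.all _ _, by simp [← ofAdd_nsmul]⟩
  intro ha
  have := Abelianization.commutator_subset_ker χ ha
  simp [χ] at this

@[simps]
def swap : Equiv.Perm (Multiplicative (ZMod n × ZMod n)) :=
  ⟨fun v => .ofAdd v.toAdd.swap, fun v => .ofAdd v.toAdd.swap, fun _ => rfl, fun _ => rfl⟩

theorem swap_mul_mulLeft_mul_swap_inv :
    swap * Equiv.mulLeft (.ofAdd ((1 : ZMod n), (0 : ZMod n))) * swap⁻¹ =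
      Equiv.mulLeft (.ofAdd (0, 1)) := by
  ext v <;> simp [Equiv.Perm.mul_apply, Equiv.Perm.inv_def]

def toPerm : Qn n →* Equiv.Perm (Multiplicative (ZMod n × ZMod n)) :=
  PresentedGroup.toGroup (f := fun b => if b then Equiv.mulLeft (.ofAdd (1, 0)) else swap) <| by
    rw [QnRels.forall_lift_eq_one_iff]
    refine ⟨?_, ?_⟩
    · simp only [Bool.false_eq_true, if_false, if_true, swap_mul_mulLeft_mul_swap_inv]
      ext v <;> simp [Equiv.Perm.mul_apply, add_left_comm]
    · simp only [if_true, Equiv.pow_mulLeft, ← ofAdd_nsmul]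
      ext v <;> simp

theorem exists_subgroup_mulEquiv :
    ∃ H : Subgroup (Qn n), Nonempty (H ≃* Multiplicative (ZMod n × ZMod n)) := by
  obtain ⟨ψ, hψ⟩ := exists_monoidHom_zmod_prod (x := (a : Qn n)) (y := t * a * t⁻¹) a_pow
    (by rw [conj_pow, a_pow, mul_one, mul_inv_cancel]) commute_conj_a.symm
  have h_a : toPerm (a : Qn n) = Equiv.mulLeft (.ofAdd (1, 0)) := PresentedGroup.toGroup.of _
  have h_conj : toPerm (t * a * t⁻¹ : Qn n) = Equiv.mulLeft (.ofAdd (0, 1)) := by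
    rw [map_mul, map_mul, map_inv, h_a, ← swap_mul_mulLeft_mul_swap_inv]
    rfl
  have hψ_inv : Function.LeftInverse (fun g => toPerm g 1) ψ := by
    intro v
    obtain ⟨i, hi⟩ := ZMod.intCast_surjective v.toAdd.1
    obtain ⟨j, hj⟩ := ZMod.intCast_surjective v.toAdd.2
    obtain rfl : v = .ofAdd ((i : ZMod n), (j : ZMod n)) := by rw [hi, hj]; rfl
    simp only [hψ, map_mul, map_zpow, h_a, h_conj, Equiv.zpow_mulLeft, Equiv.Perm.mul_apply,
      Equiv.coe_mulLeft, mul_one, ← ofAdd_zsmul, ← ofAdd_add]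
    congr 1
    ext <;> simp
  exact ⟨ψ.range, ⟨(MonoidHom.ofInjective hψ_inv.injective).symm⟩⟩

theorem not_exists_mulEquiv_presentedGroup_singleton (hn₀ : n ≠ 0) (hn₁ : n ≠ 1) :
    ¬∃ (S : Type) (w : FreeGroup S),
      Nonempty (Qn n ≃* PresentedGroup ({w} : Set (FreeGroup S))) := by
  rintro ⟨S, w, ⟨e⟩⟩
  by_cases hw : w ∈ commutator (FreeGroup S)
  · have ha : IsOfFinOrder (e a) := e.toMonoidHom.isOfFinOrder
      (isOfFinOrder_iff_pow_eq_one.mpr ⟨n, Nat.pos_of_ne_zero hn₀, a_pow⟩)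
    have := e.symm.toMonoidHom.map_mem_commutator (mem_commutator_of_isOfFinOrder hw ha)
    exact a_not_mem_commutator hn₁ (by simpa using this)
  · have hw' : ¬IsOfFinOrder (Abelianization.of w) := by
      rwa [isOfFinOrder_iff_eq_one, ← MonoidHom.mem_ker, Abelianization.ker_of]
    have hQ := ker_inf_commutator_le_of_surjective
      (p₁ := (e : Qn n →* _).comp (PresentedGroup.mk _))
      (e.surjective.comp (PresentedGroup.mk_surjective _)) (PresentedGroup.mk_surjective {w})
      (by rw [PresentedGroup.ker_mk]; exact normalClosure_singleton_inf_commutator_le hw')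
    rw [MonoidHom.ker_mulEquiv_comp, PresentedGroup.ker_mk] at hQ
    exact QnRels.commRel_not_mem_commutator_top hn₁
      (hQ (mem_inf.mpr ⟨subset_normalClosure (QnRels.commRel_mem n),
        commutator_mem_commutator trivial trivial⟩))

end Qn

/-- for `n ≥ 2`, the group `Q_n = ⟨a, t ∣ [tat⁻¹, a] = aⁿ = 1⟩`
contains a subgroup isomorphic to `ℤ/nℤ × ℤ/nℤ`, and `Q_n` is not a one-relator
group (a one-relator group being a quotient of a free group by the normal
closure of a single element). -/
theorem stmt_18 (n : ℕ) (hn : 2 ≤ n) :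
    (∃ H : Subgroup (PresentedGroup (QnRels n)),
        Nonempty (H ≃* Multiplicative (ZMod n × ZMod n))) ∧
      ¬∃ (S : Type) (w : FreeGroup S),
        Nonempty (PresentedGroup (QnRels n) ≃* PresentedGroup ({w} : Set (FreeGroup S))) :=
  ⟨Qn.exists_subgroup_mulEquiv,
    Qn.not_exists_mulEquiv_presentedGroup_singleton (by omega) (by omega)⟩
end

section
/- In the group H = ⟨a, t | [tat⁻¹, a] = aⁿ⟩, the identity [taⁿt⁻¹, aⁿ] = a^{n((n+1)ⁿ - 1)} holds. Consequently, the image of aⁿ in the abelianization of the normal closure ⟪aⁿ⟫_H has finite order, so H₁(⟪aⁿ⟫_H, ℚ) sees aⁿ as trivial. -/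
open scoped TensorProduct
open scoped commutatorElement

/-- The group `H = ⟨a, t ∣ [tat⁻¹, a] = aⁿ⟩`, presented on two generators `a`
(encoded by `true`) and `t` (encoded by `false`). -/
def HnRels (n : ℕ) : Set (FreeGroup Bool) :=
  {⁅FreeGroup.of false * FreeGroup.of true * (FreeGroup.of false)⁻¹, FreeGroup.of true⁆ *
    ((FreeGroup.of true) ^ n)⁻¹}

/-- The generator `a` of `H`. -/
def aH (n : ℕ) : PresentedGroup (HnRels n) := PresentedGroup.of true

/-- The generator `t` of `H`. -/
def tH (n : ℕ) : PresentedGroup (HnRels n) := PresentedGroup.of false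

/- Write `b = tat⁻¹`. The relation says `b a b⁻¹ = a^{n+1}`, so conjugation by `bᵏ` raises `a`
to the power `(n+1)ᵏ`; with `taⁿt⁻¹ = bⁿ` this gives `[taⁿt⁻¹, aⁿ] = a^{n((n+1)ⁿ-1)}`.
Inside `N = ⟪aⁿ⟫_H` both `x = aⁿ` and `u = taⁿt⁻¹` lie in `N` and `[u, x] = x^{(n+1)ⁿ-1}`;
commutators die in `N_ab`, so the image of `x` is torsion and vanishes after `ℚ ⊗_ℤ -`. -/

section Group

variable {G : Type*} [Group G]

theorem conj_pow_eq_pow_pow_of_conj_eq_pow {a b : G} {m : ℕ} (h : b * a * b⁻¹ = a ^ m)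
    (k j : ℕ) : b ^ k * a ^ j * (b ^ k)⁻¹ = a ^ (j * m ^ k) := by
  rw [← conj_pow, mul_comm j, pow_mul]
  congr 1
  induction k with
  | zero => simp
  | succ k ih =>
    calc b ^ (k + 1) * a * (b ^ (k + 1))⁻¹ = b ^ k * (b * a * b⁻¹) * (b ^ k)⁻¹ := by group
      _ = a ^ m ^ (k + 1) := by rw [h, ← conj_pow, ih, ← pow_mul, pow_succ]

theorem commutatorElement_pow_pow_of_commutatorElement_eq_pow {a b : G} {n : ℕ}
    (h : ⁅b, a⁆ = a ^ n) (k j : ℕ) : ⁅b ^ k, a ^ j⁆ = a ^ (j * ((n + 1) ^ k - 1)) := by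
  have hconj : b * a * b⁻¹ = a ^ (n + 1) := by
    rw [pow_succ, ← h, commutatorElement_def]; group
  have hexp : j * ((n + 1) ^ k - 1) + j = j * (n + 1) ^ k := by
    rw [Nat.mul_sub_one, Nat.sub_add_cancel (Nat.le_mul_of_pos_right j (by positivity))]
  rw [commutatorElement_def, conj_pow_eq_pow_pow_of_conj_eq_pow hconj, ← hexp, pow_add,
    mul_inv_cancel_right]

theorem Abelianization.isOfFinOrder_of_commutatorElement_eq_pow {u x : G} {m : ℕ}
    (hm : 0 < m) (h : ⁅u, x⁆ = x ^ m) : IsOfFinOrder (Abelianization.of x) := by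
  refine isOfFinOrder_iff_pow_eq_one.mpr ⟨m, hm, ?_⟩
  rw [← map_pow, ← h, map_commutatorElement, commutatorElement_eq_one_iff_commute]
  exact Commute.all _ _

end Group

theorem TensorProduct.tmul_eq_zero_of_isOfFinAddOrder {K M : Type*} [DivisionRing K] [CharZero K]
    [AddCommGroup M] {y : M} (hy : IsOfFinAddOrder y) (c : K) : c ⊗ₜ[ℤ] y = 0 := by
  obtain ⟨m, hm, hmy⟩ := isOfFinAddOrder_iff_nsmul_eq_zero.mp hy
  have hc : c = m • (c / m) := by
    rw [nsmul_eq_mul', div_mul_cancel₀ c (Nat.cast_ne_zero.mpr hm.ne')]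
  rw [hc, ← Nat.cast_smul_eq_nsmul ℤ, TensorProduct.smul_tmul, Nat.cast_smul_eq_nsmul, hmy,
    TensorProduct.tmul_zero]

theorem commutatorElement_conj_aH_aH (n : ℕ) : ⁅tH n * aH n * (tH n)⁻¹, aH n⁆ = aH n ^ n :=
  mul_inv_eq_one.mp (PresentedGroup.one_of_mem (rels := HnRels n) rfl)

theorem commutatorElement_conj_aH_pow_aH_pow (n : ℕ) :
    ⁅tH n * aH n ^ n * (tH n)⁻¹, aH n ^ n⁆ = aH n ^ (n * ((n + 1) ^ n - 1)) := by
  rw [← conj_pow, commutatorElement_pow_pow_of_commutatorElement_eq_pow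
    (commutatorElement_conj_aH_aH n)]

theorem isOfFinOrder_abelianization_of_aH_pow (n : ℕ) :
    IsOfFinOrder (Abelianization.of
      (⟨aH n ^ n, Subgroup.subset_normalClosure rfl⟩ : Subgroup.normalClosure {aH n ^ n})) := by
  set x : Subgroup.normalClosure {aH n ^ n} := ⟨aH n ^ n, Subgroup.subset_normalClosure rfl⟩
  rcases Nat.eq_zero_or_pos n with rfl | hn
  · have hx : x = 1 := Subtype.ext (pow_zero _)
    rw [hx, map_one]
    exact IsOfFinOrder.one
  · let u : Subgroup.normalClosure {aH n ^ n} :=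
      ⟨_, Subgroup.normalClosure_normal.conj_mem _ x.2 (tH n)⟩
    have hux : ⁅u, x⁆ = x ^ ((n + 1) ^ n - 1) :=
      Subtype.ext ((commutatorElement_conj_aH_pow_aH_pow n).trans (pow_mul _ _ _))
    exact Abelianization.isOfFinOrder_of_commutatorElement_eq_pow
      (Nat.sub_pos_of_lt (Nat.one_lt_pow hn.ne' (by omega))) hux

/-- in `H = ⟨a, t ∣ [tat⁻¹, a] = aⁿ⟩` the identity
`[taⁿt⁻¹, aⁿ] = a^{n((n+1)ⁿ - 1)}` holds.  Consequently, the image of `aⁿ` in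
the abelianization of the normal closure `⟪aⁿ⟫_H` has finite order, so that
`H₁(⟪aⁿ⟫_H, ℚ) = ℚ ⊗_ℤ (⟪aⁿ⟫_H)_{ab}` sees `aⁿ` as trivial. -/
theorem stmt_19 (n : ℕ) :
    ⁅tH n * (aH n) ^ n * (tH n)⁻¹, (aH n) ^ n⁆ = (aH n) ^ (n * ((n + 1) ^ n - 1)) ∧
      (∃ m : ℕ, 0 < m ∧
        (Abelianization.of
          (⟨(aH n) ^ n, Subgroup.subset_normalClosure rfl⟩ :
            Subgroup.normalClosure {(aH n) ^ n})) ^ m = 1) ∧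
      ((1 : ℚ) ⊗ₜ[ℤ] Additive.ofMul
          (Abelianization.of
            (⟨(aH n) ^ n, Subgroup.subset_normalClosure rfl⟩ :
              Subgroup.normalClosure {(aH n) ^ n})) :
        TensorProduct ℤ ℚ
          (Additive (Abelianization (Subgroup.normalClosure {(aH n) ^ n})))) = 0 := by
  have hfin := isOfFinOrder_abelianization_of_aH_pow n
  exact ⟨commutatorElement_conj_aH_pow_aH_pow n, isOfFinOrder_iff_pow_eq_one.mp hfin,
    TensorProduct.tmul_eq_zero_of_isOfFinAddOrder (isOfFinAddOrder_ofMul_iff.mpr hfin) _⟩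
end
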